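/- Let $d \geq 1$, let $R$ be a commutative ring and let $M_j$, $j = 1, \dots, d$, be $R$-modules. For each $j$ let $U^{(j)} : \mathbb{N} \to M_j$ be a sequence with $U^{(j)}_0 = 0$, and define $\Delta^{(j)}_0 := 0$ and $\Delta^{(j)}_i := U^{(j)}_i - U^{(j)}_{i-1}$ for $i \geq 1$. Then for every $k \in \mathbb{N}$ the Smolyak operator of order $k$, $\mathcal{Q}_k^d := \sum_{\alpha \in \mathbb{N}^d, |\alpha|_1 \leq k} \bigotimes_{j=1}^d \Delta^{(j)}_{\alpha_j}$, admits the representation $$\mathcal{Q}_k^d = \sum_{\substack{\alpha \in \mathbb{N}^d, \ \alpha_j \geq 1 \ \forall j \\ |\alpha|_1 \leq k}} \ \sum_{\substack{\gamma \in \{0,1\}^d \\ \alpha_j - \gamma_j \geq 1 \ \forall j}} (-1)^{\gamma_1 + \cdots + \gamma_d} \, \bigotimes_{j=1}^{d} U^{(j)}_{\alpha_j - \gamma_j}$$ as an identity in the tensor product $\bigotimes_{j=1}^d M_j$ over $R$. -/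

import Mathlib

/-! For `α ≥ 1` each factor `Δ^{(j)}_{α_j}` is the difference `U^{(j)}_{α_j} - U^{(j)}_{α_j - 1}`,
and expanding the tensor product of `d` differences multilinearly gives the signed sum over
`γ ∈ {0,1}^d`. The restrictions `α ≥ 1` and `α - γ ≥ 1` only drop terms with a zero tensor
factor, `Δ^{(j)}_0 = 0` resp. `U^{(j)}_0 = 0`. -/

open scoped TensorProduct
open Finset

namespace MultilinearMap

variable {R ι N : Type*} [CommRing R] [Fintype ι] [DecidableEq ι] {M : ι → Type*}
  [∀ i, AddCommGroup (M i)] [∀ i, Module R (M i)] [AddCommGroup N] [Module R N]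

theorem map_sub_univ (f : MultilinearMap R M N) (m m' : ∀ i, M i) :
    f (m - m') = ∑ γ : ι → Bool, ((-1 : ℤ) ^ #{i | γ i = true}) •
      f (fun i => if γ i then m' i else m i) := by
  have hsplit : m - m' = fun i => ∑ b : Bool, if b then -m' i else m i := by
    funext i
    simp [sub_eq_add_neg, add_comm]
  rw [hsplit, map_sum]
  refine sum_congr rfl fun γ _ => ?_
  have hsign : (fun i => if γ i then -m' i else m i) =
      fun i => (if γ i then (-1 : R) else 1) • if γ i then m' i else m i := by
    funext i
    cases γ i <;> simp
  rw [hsign, map_smul_univ, prod_ite, prod_const, prod_const_one, mul_one,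
    ← Int.cast_smul_eq_zsmul R]
  push_cast
  rfl

end MultilinearMap

theorem smolyak_rule_representation_general
    (d : ℕ) (R : Type*) [CommRing R]
    (M : Fin d → Type*) [∀ j, AddCommGroup (M j)] [∀ j, Module R (M j)]
    (U : ∀ j : Fin d, ℕ → M j) (hU0 : ∀ j, U j 0 = 0)
    (Δ : ∀ j : Fin d, ℕ → M j) (hΔ0 : ∀ j, Δ j 0 = 0)
    (hΔ : ∀ j, ∀ i : ℕ, 1 ≤ i → Δ j i = U j i - U j (i - 1))
    (k : ℕ) :
    (∑ α ∈ (Fintype.piFinset fun _ : Fin d => Finset.range (k + 1)).filter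
        (fun α : Fin d → ℕ => ∑ j, α j ≤ k),
      ⨂ₜ[R] j, Δ j (α j)) =
    ∑ α ∈ (Fintype.piFinset fun _ : Fin d => Finset.range (k + 1)).filter
        (fun α : Fin d → ℕ => (∀ j, 1 ≤ α j) ∧ ∑ j, α j ≤ k),
      ∑ γ ∈ Finset.univ.filter
          (fun γ : Fin d → Bool => ∀ j, 1 ≤ α j - (if γ j then 1 else 0)),
        ((-1 : ℤ) ^ (Finset.univ.filter (fun j => γ j = true)).card) •
          ⨂ₜ[R] j, U j (α j - (if γ j then 1 else 0)) := by
  rw [← sum_filter_of_ne (p := fun α : Fin d → ℕ => ∀ j, 1 ≤ α j) fun α _ hα => ?supportΔ,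
    filter_filter]
  case supportΔ =>
    by_contra! h
    obtain ⟨j, hj⟩ := h
    exact hα ((PiTensorProduct.tprod R).map_coord_zero j (by simp [Nat.lt_one_iff.mp hj, hΔ0]))
  refine sum_congr (by simp only [and_comm]) fun α hα => ?_
  have hpos : ∀ j, 1 ≤ α j := (mem_filter.mp hα).2.1
  have hdiff : (fun j => Δ j (α j)) = (fun j => U j (α j)) - fun j => U j (α j - 1) :=
    funext fun j => hΔ j (α j) (hpos j)
  rw [hdiff, MultilinearMap.map_sub_univ, sum_filter_of_ne fun γ _ hγ => ?supportU]
  case supportU =>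
    by_contra! h
    obtain ⟨j, hj⟩ := h
    apply hγ
    rw [(PiTensorProduct.tprod R).map_coord_zero j (by simp [Nat.lt_one_iff.mp hj, hU0])]
    exact zsmul_zero _
  refine sum_congr rfl fun γ _ => ?_
  congr 2
  funext j
  cases γ j <;> rfl

/-- The Smolyak sparse quadrature rule of order `k`,
`Q_k^d = ∑_{|α|₁ ≤ k} ⨂_j Δ^{(j)}_{α_j}`, admits the representation as a signed
combination of tensor products of the univariate rules `U^{(j)}`:
`Q_k^d = ∑_{|α|₁ ≤ k, α ≥ 1} ∑_{γ ∈ {0,1}^d, α - γ ≥ 1} (-1)^{|γ|₁} ⨂_j U^{(j)}_{α_j - γ_j}`.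
Since every `α` with `|α|₁ ≤ k` satisfies `α j ≤ k` for all `j`, the (finitely supported)
sum over `{α ∈ ℕ^d : |α|₁ ≤ k}` is expressed as a sum over the finite set of functions
`Fin d → {0, …, k}` with `∑ j, α j ≤ k`. -/
theorem smolyak_rule_representation
    (d : ℕ) (hd : 1 ≤ d) (R : Type*) [CommRing R]
    (M : Fin d → Type*) [∀ j, AddCommGroup (M j)] [∀ j, Module R (M j)]
    (U : ∀ j : Fin d, ℕ → M j) (hU0 : ∀ j, U j 0 = 0)
    (Δ : ∀ j : Fin d, ℕ → M j) (hΔ0 : ∀ j, Δ j 0 = 0)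
    (hΔ : ∀ j, ∀ i : ℕ, 1 ≤ i → Δ j i = U j i - U j (i - 1))
    (k : ℕ) :
    (∑ α ∈ (Fintype.piFinset fun _ : Fin d => Finset.range (k + 1)).filter
        (fun α : Fin d → ℕ => ∑ j, α j ≤ k),
      ⨂ₜ[R] j, Δ j (α j)) =
    ∑ α ∈ (Fintype.piFinset fun _ : Fin d => Finset.range (k + 1)).filter
        (fun α : Fin d → ℕ => (∀ j, 1 ≤ α j) ∧ ∑ j, α j ≤ k),
      ∑ γ ∈ Finset.univ.filter
          (fun γ : Fin d → Bool => ∀ j, 1 ≤ α j - (if γ j then 1 else 0)),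
        ((-1 : ℤ) ^ (Finset.univ.filter (fun j => γ j = true)).card) •
          ⨂ₜ[R] j, U j (α j - (if γ j then 1 else 0)) :=
  smolyak_rule_representation_general d R M U hU0 Δ hΔ0 hΔ k
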